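/- Let F(w, w̄, v) be a smooth real-valued function of a complex variable w and real variable v on an open set U ⊆ ℂ × ℝ satisfying F_{vv} F_{ww̄} − F_{vw} F_{vw̄} = 4 e^{2v} on U. Suppose the map (w, v) ↦ (w, F_v(w, w̄, v)) is a diffeomorphism from U onto an open set U′ ⊆ ℂ × ℝ with smooth inverse (w, j) ↦ (w, V(w, w̄, j)), so that F_v(w, w̄, V(w, w̄, j)) = j on U′. Then the function V(w, w̄, j) satisfies the SU(∞) Toda (Boyer–Finley) equation V_{ww̄} + 2 (e^{2V})_{jj} = 0 on U′. -/

import Mathlib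

noncomputable section

/-- Wirtinger derivative ∂_w of a complex-valued function of (w, v) ∈ ℂ × ℝ. -/
def dw (G : ℂ → ℝ → ℂ) : ℂ → ℝ → ℂ := fun w v =>
  ((fderiv ℝ (fun z => G z v) w 1) - Complex.I * (fderiv ℝ (fun z => G z v) w Complex.I)) / 2

/-- Wirtinger derivative ∂_{w̄} of a complex-valued function of (w, v) ∈ ℂ × ℝ. -/
def dwb (G : ℂ → ℝ → ℂ) : ℂ → ℝ → ℂ := fun w v =>
  ((fderiv ℝ (fun z => G z v) w 1) + Complex.I * (fderiv ℝ (fun z => G z v) w Complex.I)) / 2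

/-- Partial derivative ∂_v of a complex-valued function of (w, v) ∈ ℂ × ℝ. -/
def dv (G : ℂ → ℝ → ℂ) : ℂ → ℝ → ℂ := fun w v => deriv (fun t => G w t) v

/-- A real-valued function of (w, v), viewed as complex-valued. -/
def cx (G : ℂ → ℝ → ℝ) : ℂ → ℝ → ℂ := fun w v => (G w v : ℂ)

/-- Equation (alterform) at the point (w, v):
(G + G_{vv} − 2 G_v sin α) G_{ww̄}
  − (e^{iα} G_{w̄} − i G_{vw̄})(e^{−iα} G_w + i G_{vw}) = 4. -/
def Alterform (α : ℝ) (G : ℂ → ℝ → ℝ) (w : ℂ) (v : ℝ) : Prop :=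
  (cx G w v + dv (dv (cx G)) w v - 2 * dv (cx G) w v * (Real.sin α : ℂ))
      * dwb (dw (cx G)) w v
    - (Complex.exp (Complex.I * (α : ℂ)) * dwb (cx G) w v
        - Complex.I * dwb (dv (cx G)) w v)
      * (Complex.exp (-(Complex.I * (α : ℂ))) * dw (cx G) w v
        + Complex.I * dw (dv (cx G)) w v)
    = 4

/-- Real-valued ∂_v. -/
def dvR (F : ℂ → ℝ → ℝ) : ℂ → ℝ → ℝ := fun w v => deriv (fun t => F w t) v

open Complex

/-- slice in first variable: fderiv of z ↦ f (z, v). -/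
private lemma hasFDerivAt_sliceH {f : ℂ × ℝ → ℝ} {w : ℂ} {v : ℝ}
    (hf : DifferentiableAt ℝ f (w, v)) :
    HasFDerivAt (fun z : ℂ => f (z, v))
      ((fderiv ℝ f (w, v)).comp ((ContinuousLinearMap.id ℝ ℂ).prod 0)) w :=
  hf.hasFDerivAt.comp w ((hasFDerivAt_id w).prodMk (hasFDerivAt_const v w))

private lemma fderiv_sliceH {f : ℂ × ℝ → ℝ} {w : ℂ} {v : ℝ}
    (hf : DifferentiableAt ℝ f (w, v)) (e : ℂ) :
    fderiv ℝ (fun z : ℂ => f (z, v)) w e = fderiv ℝ f (w, v) (e, 0) := by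
  rw [(hasFDerivAt_sliceH hf).fderiv]
  simp

/-- slice in second variable. -/
private lemma hasDerivAt_sliceV {f : ℂ × ℝ → ℝ} {w : ℂ} {v : ℝ}
    (hf : DifferentiableAt ℝ f (w, v)) :
    HasDerivAt (fun t : ℝ => f (w, t)) (fderiv ℝ f (w, v) (0, 1)) v := by
  have h : HasDerivAt (fun t : ℝ => ((w : ℂ), t)) ((0 : ℂ), (1 : ℝ)) v :=
    (hasDerivAt_const v w).prodMk (hasDerivAt_id v)
  exact hf.hasFDerivAt.comp_hasDerivAt v h

private lemma fderiv_ofReal_apply (g : ℂ → ℝ) (w : ℂ) (e : ℂ) :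
    fderiv ℝ (fun z => ((g z : ℝ) : ℂ)) w e = ((fderiv ℝ g w e : ℝ) : ℂ) := by
  by_cases hg : DifferentiableAt ℝ g w
  · have h := (Complex.ofRealCLM.hasFDerivAt.comp w hg.hasFDerivAt)
    rw [show (fun z => ((g z : ℝ) : ℂ)) = (⇑Complex.ofRealCLM ∘ g) from rfl, h.fderiv]; simp
  · have h2 : ¬ DifferentiableAt ℝ (fun z => ((g z : ℝ) : ℂ)) w := by
      intro h
      have := (Complex.reCLM.differentiable.differentiableAt (x := ((g w : ℝ) : ℂ))).comp w h
      simp only [Function.comp_def, Complex.reCLM_apply, Complex.ofReal_re] at this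
      exact hg this
    rw [fderiv_zero_of_not_differentiableAt hg, fderiv_zero_of_not_differentiableAt h2]; simp

private lemma deriv_ofReal_comp (g : ℝ → ℝ) (t : ℝ) :
    deriv (fun s => ((g s : ℝ) : ℂ)) t = ((deriv g t : ℝ) : ℂ) := by
  by_cases hg : DifferentiableAt ℝ g t
  · exact (Complex.ofRealCLM.hasFDerivAt.comp_hasDerivAt t hg.hasDerivAt).deriv
  · have h2 : ¬ DifferentiableAt ℝ (fun s => ((g s : ℝ) : ℂ)) t := by
      intro h
      have := (Complex.reCLM.differentiable.differentiableAt (x := ((g t : ℝ) : ℂ))).comp t h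
      simp only [Function.comp_def, Complex.reCLM_apply, Complex.ofReal_re] at this
      exact hg this
    rw [deriv_zero_of_not_differentiableAt hg, deriv_zero_of_not_differentiableAt h2]; simp

/-- smoothness of directional derivative on an open set -/
private lemma contDiffOn_pd {f : ℂ × ℝ → ℝ} {s : Set (ℂ × ℝ)}
    (hf : ContDiffOn ℝ (⊤ : ℕ∞) f s) (hs : IsOpen s) (d : ℂ × ℝ) :
    ContDiffOn ℝ (⊤ : ℕ∞) (fun p => fderiv ℝ f p d) s := by
  have h1 : ContDiffOn ℝ (⊤ : ℕ∞) (fun p => fderiv ℝ f p) s :=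
    hf.fderiv_of_isOpen hs (by norm_cast)
  exact h1.clm_apply contDiffOn_const

private lemma diffAt_of_cdo {f : ℂ × ℝ → ℝ} {s : Set (ℂ × ℝ)}
    (hf : ContDiffOn ℝ (⊤ : ℕ∞) f s) (hs : IsOpen s) {p : ℂ × ℝ} (hp : p ∈ s) :
    DifferentiableAt ℝ f p :=
  (hf.differentiableOn (by simp)).differentiableAt (hs.mem_nhds hp)

/-- symmetry of second directional derivatives -/
private lemma pd2_symm {f : ℂ × ℝ → ℝ} {s : Set (ℂ × ℝ)}
    (hf : ContDiffOn ℝ (⊤ : ℕ∞) f s) (hs : IsOpen s) {p : ℂ × ℝ} (hp : p ∈ s)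
    (d e : ℂ × ℝ) :
    fderiv ℝ (fun q => fderiv ℝ f q d) p e = fderiv ℝ (fun q => fderiv ℝ f q e) p d := by
  have hdiff : DifferentiableAt ℝ (fun q => fderiv ℝ f q) p :=
    ((hf.fderiv_of_isOpen (m := (⊤:ℕ∞)) hs (by norm_cast)).differentiableOn
      (by simp)).differentiableAt (hs.mem_nhds hp)
  have hsymm := (hf.contDiffAt (hs.mem_nhds hp)).isSymmSndFDerivAt (by simp; exact WithTop.coe_le_coe.2 (le_top : (2:ℕ∞) ≤ ⊤))
  rw [fderiv_clm_apply hdiff (differentiableAt_const d),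
      fderiv_clm_apply hdiff (differentiableAt_const e)]
  simp [hsymm e d]

private lemma slice_eventuallyH {s : Set (ℂ × ℝ)} (hs : IsOpen s) {w : ℂ} {v : ℝ}
    (h : (w, v) ∈ s) : ∀ᶠ z in nhds w, (z, v) ∈ s :=
  (Continuous.continuousAt (continuous_id.prodMk continuous_const)).preimage_mem_nhds
    (hs.mem_nhds h)

private lemma slice_eventuallyV {s : Set (ℂ × ℝ)} (hs : IsOpen s) {w : ℂ} {v : ℝ}
    (h : (w, v) ∈ s) : ∀ᶠ t in nhds v, (w, t) ∈ s :=
  (Continuous.continuousAt (continuous_const.prodMk continuous_id)).preimage_mem_nhds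
    (hs.mem_nhds h)

private lemma W_dvR {Q : ℂ → ℝ → ℝ} {f : ℂ × ℝ → ℝ} {s : Set (ℂ × ℝ)} (hs : IsOpen s)
    (hf : ContDiffOn ℝ (⊤ : ℕ∞) f s) (hQf : ∀ p ∈ s, Q p.1 p.2 = f p)
    {w : ℂ} {v : ℝ} (h : (w, v) ∈ s) :
    dvR Q w v = fderiv ℝ f (w, v) (0, 1) := by
  have hev : (fun t => Q w t) =ᶠ[nhds v] (fun t => f (w, t)) := by
    filter_upwards [slice_eventuallyV hs h] with t ht
    exact hQf (w, t) ht
  have := (hasDerivAt_sliceV (diffAt_of_cdo hf hs h)).deriv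
  simp only [dvR]
  rw [hev.deriv_eq, this]

private lemma dv_cx_eq (Q : ℂ → ℝ → ℝ) : dv (cx Q) = cx (dvR Q) := by
  funext w v
  simp only [dv, cx, dvR]
  exact deriv_ofReal_comp (fun t => Q w t) v

private lemma W_dv {Q : ℂ → ℝ → ℝ} {f : ℂ × ℝ → ℝ} {s : Set (ℂ × ℝ)} (hs : IsOpen s)
    (hf : ContDiffOn ℝ (⊤ : ℕ∞) f s) (hQf : ∀ p ∈ s, Q p.1 p.2 = f p)
    {w : ℂ} {v : ℝ} (h : (w, v) ∈ s) :
    dv (cx Q) w v = ((fderiv ℝ f (w, v) (0, 1) : ℝ) : ℂ) := by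
  rw [dv_cx_eq]
  simp only [cx]
  rw [W_dvR hs hf hQf h]

private lemma W_fderiv_slice {Q : ℂ → ℝ → ℝ} {f : ℂ × ℝ → ℝ} {s : Set (ℂ × ℝ)} (hs : IsOpen s)
    (hf : ContDiffOn ℝ (⊤ : ℕ∞) f s) (hQf : ∀ p ∈ s, Q p.1 p.2 = f p)
    {w : ℂ} {v : ℝ} (h : (w, v) ∈ s) (e : ℂ) :
    fderiv ℝ (fun z => ((Q z v : ℝ) : ℂ)) w e = ((fderiv ℝ f (w, v) (e, 0) : ℝ) : ℂ) := by
  rw [fderiv_ofReal_apply]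
  have hev : (fun z => Q z v) =ᶠ[nhds w] (fun z => f (z, v)) := by
    filter_upwards [slice_eventuallyH hs h] with z hz
    exact hQf (z, v) hz
  rw [hev.fderiv_eq, fderiv_sliceH (diffAt_of_cdo hf hs h) e]

private lemma W_dw {Q : ℂ → ℝ → ℝ} {f : ℂ × ℝ → ℝ} {s : Set (ℂ × ℝ)} (hs : IsOpen s)
    (hf : ContDiffOn ℝ (⊤ : ℕ∞) f s) (hQf : ∀ p ∈ s, Q p.1 p.2 = f p)
    {w : ℂ} {v : ℝ} (h : (w, v) ∈ s) :
    dw (cx Q) w v = (((fderiv ℝ f (w, v) (1, 0) : ℝ) : ℂ)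
      - Complex.I * ((fderiv ℝ f (w, v) (Complex.I, 0) : ℝ) : ℂ)) / 2 := by
  simp only [dw, cx]
  rw [W_fderiv_slice hs hf hQf h 1, W_fderiv_slice hs hf hQf h Complex.I]

private lemma W_dwb {Q : ℂ → ℝ → ℝ} {f : ℂ × ℝ → ℝ} {s : Set (ℂ × ℝ)} (hs : IsOpen s)
    (hf : ContDiffOn ℝ (⊤ : ℕ∞) f s) (hQf : ∀ p ∈ s, Q p.1 p.2 = f p)
    {w : ℂ} {v : ℝ} (h : (w, v) ∈ s) :
    dwb (cx Q) w v = (((fderiv ℝ f (w, v) (1, 0) : ℝ) : ℂ)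
      + Complex.I * ((fderiv ℝ f (w, v) (Complex.I, 0) : ℝ) : ℂ)) / 2 := by
  simp only [dwb, cx]
  rw [W_fderiv_slice hs hf hQf h 1, W_fderiv_slice hs hf hQf h Complex.I]


private lemma W_dwb_dw {Q : ℂ → ℝ → ℝ} {f : ℂ × ℝ → ℝ} {s : Set (ℂ × ℝ)} (hs : IsOpen s)
    (hf : ContDiffOn ℝ (⊤ : ℕ∞) f s) (hQf : ∀ p ∈ s, Q p.1 p.2 = f p)
    {w : ℂ} {v : ℝ} (h : (w, v) ∈ s) :
    dwb (dw (cx Q)) w v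
      = (((fderiv ℝ (fun p => fderiv ℝ f p (1, 0)) (w, v) (1, 0)
          + fderiv ℝ (fun p => fderiv ℝ f p (Complex.I, 0)) (w, v) (Complex.I, 0) : ℝ)) : ℂ) / 4 := by
  set A : ℂ × ℝ → ℝ := fun p => fderiv ℝ f p ((1 : ℂ), (0 : ℝ)) with hA_def
  set B : ℂ × ℝ → ℝ := fun p => fderiv ℝ f p ((Complex.I : ℂ), (0 : ℝ)) with hB_def
  have hA : ContDiffOn ℝ (⊤ : ℕ∞) A s := contDiffOn_pd hf hs _
  have hB : ContDiffOn ℝ (⊤ : ℕ∞) B s := contDiffOn_pd hf hs _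
  have hev : (fun z => dw (cx Q) z v)
      =ᶠ[nhds w] (fun z => (2⁻¹ : ℂ) * (((A (z, v) : ℝ) : ℂ) - Complex.I * ((B (z, v) : ℝ) : ℂ))) := by
    filter_upwards [slice_eventuallyH hs h] with z hz
    rw [W_dw hs hf hQf hz]; ring
  have hAd : DifferentiableAt ℝ A (w, v) := diffAt_of_cdo hA hs h
  have hBd : DifferentiableAt ℝ B (w, v) := diffAt_of_cdo hB hs h
  have hAc : HasFDerivAt (fun z : ℂ => ((A (z, v) : ℝ) : ℂ))
      (Complex.ofRealCLM.comp ((fderiv ℝ A (w, v)).comp ((ContinuousLinearMap.id ℝ ℂ).prod 0))) w :=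
    Complex.ofRealCLM.hasFDerivAt.comp w (hasFDerivAt_sliceH hAd)
  have hBc : HasFDerivAt (fun z : ℂ => ((B (z, v) : ℝ) : ℂ))
      (Complex.ofRealCLM.comp ((fderiv ℝ B (w, v)).comp ((ContinuousLinearMap.id ℝ ℂ).prod 0))) w :=
    Complex.ofRealCLM.hasFDerivAt.comp w (hasFDerivAt_sliceH hBd)
  have hRHS := (hAc.sub (hBc.const_mul Complex.I)).const_mul (2⁻¹ : ℂ)
  have hfd := hev.fderiv_eq.trans hRHS.fderiv
  simp only [dwb]
  rw [hfd]
  have hsymm : fderiv ℝ A (w, v) ((Complex.I : ℂ), (0 : ℝ)) = fderiv ℝ B (w, v) ((1 : ℂ), (0 : ℝ)) :=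
    pd2_symm hf hs h _ _
  simp only [ContinuousLinearMap.smulRight_apply, ContinuousLinearMap.sub_apply,
    ContinuousLinearMap.comp_apply, ContinuousLinearMap.smul_apply,
    ContinuousLinearMap.prod_apply, ContinuousLinearMap.coe_id', id_eq,
    ContinuousLinearMap.zero_apply, Complex.ofRealCLM_apply, smul_eq_mul, one_smul]
  rw [hsymm]
  push_cast
  ring_nf
  linear_combination (-((fderiv ℝ B (w,v)) ((Complex.I:ℂ),(0:ℝ)) : ℂ) / 4) * Complex.I_sq

private lemma clm_pair (L : ℂ × ℝ →L[ℝ] ℝ) (c : ℂ) (t : ℝ) :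
    L (c, t) = L (c, 0) + t * L (0, 1) := by
  have h : ((c, t) : ℂ × ℝ) = (c, (0 : ℝ)) + t • ((0 : ℂ), (1 : ℝ)) := by
    simp [Prod.ext_iff]
  rw [h, map_add, map_smul, smul_eq_mul]

private lemma hasFDerivAt_compV {H : ℂ × ℝ → ℝ} {Vf : ℂ × ℝ → ℝ} {p : ℂ × ℝ}
    (hH : DifferentiableAt ℝ H (p.1, Vf p)) (hV : DifferentiableAt ℝ Vf p) :
    HasFDerivAt (fun r : ℂ × ℝ => H (r.1, Vf r))
      ((fderiv ℝ H (p.1, Vf p)).comp ((ContinuousLinearMap.fst ℝ ℂ ℝ).prod (fderiv ℝ Vf p))) p :=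
  hH.hasFDerivAt.comp p ((hasFDerivAt_fst).prodMk hV.hasFDerivAt)


private lemma toda_algebra (a b gx gy gxx gyy gxv gyv fL E vx vy vj vxx vyy vjj : ℝ)
    (h1 : a * vj = 1)
    (h2 : gx + a * vx = 0)
    (h3 : gy + a * vy = 0)
    (h4 : gxx + 2*vx*gxv + vx^2*b + a*vxx = 0)
    (h5 : gyy + 2*vy*gyv + vy^2*b + a*vyy = 0)
    (h6 : b*vj^2 + a*vjj = 0)
    (h7 : a*fL - gx^2 - gy^2 = 16*E)
    (h8 : b*fL + a*(gxx+gyy) - 2*gx*gxv - 2*gy*gyv = 32*E) :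
    vxx + vyy + 16*E*vjj + 32*E*vj^2 = 0 := by
  have ha : a ≠ 0 := by
    intro h; rw [h] at h1; simp at h1
  have key : a^3 * (vxx + vyy + 16*E*vjj + 32*E*vj^2) = 0 := by
    linear_combination a^2*h4 + a^2*h5 + 16*E*a^2*h6 + (-a)*h8 + b*h7 + (-2*a*gxv + b*gx - a*b*vx)*h2 + (-2*a*gyv + b*gy - a*b*vy)*h3 + ((32*E*a - 16*E*b)*(a*vj+1))*h1
  have := mul_eq_zero.1 key
  rcases this with h | h
  · exact absurd h (pow_ne_zero 3 ha)
  · exact h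

set_option maxHeartbeats 1000000 in
/-- If F satisfies F_{vv} F_{ww̄} − F_{vw} F_{vw̄} = 4 e^{2v} on U and
(w, v) ↦ (w, F_v) is a diffeomorphism of U onto U′ with inverse (w, j) ↦ (w, V(w, w̄, j)),
then V satisfies the SU(∞) Toda equation V_{ww̄} + 2 (e^{2V})_{jj} = 0 on U′. -/
theorem toda_from_euclid (U U' : Set (ℂ × ℝ)) (hU : IsOpen U) (hU' : IsOpen U')
    (F : ℂ → ℝ → ℝ)
    (hF : ContDiffOn ℝ (⊤ : ℕ∞) (fun p : ℂ × ℝ => F p.1 p.2) U)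
    (heq : ∀ w : ℂ, ∀ v : ℝ, (w, v) ∈ U →
      dv (dv (cx F)) w v * dwb (dw (cx F)) w v
        - dw (dv (cx F)) w v * dwb (dv (cx F)) w v
        = ((4 * Real.exp (2 * v) : ℝ) : ℂ))
    (V : ℂ → ℝ → ℝ)
    (hV : ContDiffOn ℝ (⊤ : ℕ∞) (fun p : ℂ × ℝ => V p.1 p.2) U')
    (hto : ∀ w : ℂ, ∀ v : ℝ, (w, v) ∈ U → (w, dvR F w v) ∈ U' ∧ V w (dvR F w v) = v)
    (hfrom : ∀ w : ℂ, ∀ j : ℝ, (w, j) ∈ U' → (w, V w j) ∈ U ∧ dvR F w (V w j) = j) :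
    ∀ w : ℂ, ∀ j : ℝ, (w, j) ∈ U' →
      dwb (dw (cx V)) w j
        + 2 * ((deriv (fun s => deriv (fun r => Real.exp (2 * V w r)) s) j : ℝ) : ℂ)
        = 0 := by
  intro w j hp
  set Ff : ℂ × ℝ → ℝ := fun p => F p.1 p.2 with hFf_def
  set Vf : ℂ × ℝ → ℝ := fun p => V p.1 p.2 with hVf_def
  have hQfF : ∀ p ∈ U, F p.1 p.2 = Ff p := fun p _ => rfl
  have hQfV : ∀ p ∈ U', V p.1 p.2 = Vf p := fun p _ => rfl
  set G : ℂ × ℝ → ℝ := fun p => fderiv ℝ Ff p ((0 : ℂ), (1 : ℝ)) with hG_def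
  have hG : ContDiffOn ℝ (⊤ : ℕ∞) G U := contDiffOn_pd hF hU _
  have hdvRF : ∀ w' : ℂ, ∀ v' : ℝ, (w', v') ∈ U → dvR F w' v' = G (w', v') :=
    fun w' v' h => W_dvR hU hF hQfF h
  -- the point and its image
  set v₀ : ℝ := V w j with hv0_def
  have hq : ((w, v₀) : ℂ × ℝ) ∈ U := (hfrom w j hp).1
  -- abbreviations: F-side second/third derivative data at q = (w, v₀)
  set a : ℝ := fderiv ℝ G (w, v₀) (0, 1) with ha_def
  set b : ℝ := fderiv ℝ (fun p => fderiv ℝ G p ((0:ℂ), (1:ℝ))) (w, v₀) (0, 1) with hb_def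
  set gx : ℝ := fderiv ℝ G (w, v₀) (1, 0) with hgx_def
  set gy : ℝ := fderiv ℝ G (w, v₀) (Complex.I, 0) with hgy_def
  set gxx : ℝ := fderiv ℝ (fun p => fderiv ℝ G p ((1:ℂ), (0:ℝ))) (w, v₀) (1, 0) with hgxx_def
  set gyy : ℝ := fderiv ℝ (fun p => fderiv ℝ G p ((Complex.I:ℂ), (0:ℝ))) (w, v₀) (Complex.I, 0) with hgyy_def
  set gxv : ℝ := fderiv ℝ (fun p => fderiv ℝ G p ((1:ℂ), (0:ℝ))) (w, v₀) (0, 1) with hgxv_def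
  set gyv : ℝ := fderiv ℝ (fun p => fderiv ℝ G p ((Complex.I:ℂ), (0:ℝ))) (w, v₀) (0, 1) with hgyv_def
  set fL : ℝ := fderiv ℝ (fun p => fderiv ℝ Ff p ((1:ℂ), (0:ℝ))) (w, v₀) (1, 0)
    + fderiv ℝ (fun p => fderiv ℝ Ff p ((Complex.I:ℂ), (0:ℝ))) (w, v₀) (Complex.I, 0) with hfL_def
  set E : ℝ := Real.exp (2 * v₀) with hE_def
  -- V-side derivative data at p = (w, j)
  set vx : ℝ := fderiv ℝ Vf (w, j) (1, 0) with hvx_def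
  set vy : ℝ := fderiv ℝ Vf (w, j) (Complex.I, 0) with hvy_def
  set vj : ℝ := fderiv ℝ Vf (w, j) (0, 1) with hvj_def
  set vxx : ℝ := fderiv ℝ (fun p => fderiv ℝ Vf p ((1:ℂ), (0:ℝ))) (w, j) (1, 0) with hvxx_def
  set vyy : ℝ := fderiv ℝ (fun p => fderiv ℝ Vf p ((Complex.I:ℂ), (0:ℝ))) (w, j) (Complex.I, 0) with hvyy_def
  set vjj : ℝ := fderiv ℝ (fun p => fderiv ℝ Vf p ((0:ℂ), (1:ℝ))) (w, j) (0, 1) with hvjj_def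
  -- the euclid equation in real form, at every point of U
  have heqR : ∀ w' : ℂ, ∀ v' : ℝ, (w', v') ∈ U →
      fderiv ℝ G (w', v') (0, 1)
          * (fderiv ℝ (fun p => fderiv ℝ Ff p ((1:ℂ), (0:ℝ))) (w', v') (1, 0)
            + fderiv ℝ (fun p => fderiv ℝ Ff p ((Complex.I:ℂ), (0:ℝ))) (w', v') (Complex.I, 0))
        - fderiv ℝ G (w', v') (1, 0) ^ 2 - fderiv ℝ G (w', v') (Complex.I, 0) ^ 2
        = 16 * Real.exp (2 * v') := by
    intro w' v' h'
    have hGq : forall p, p ∈ U → dvR F p.1 p.2 = G p := fun p hp2 =>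
      hdvRF p.1 p.2 (by rwa [Prod.mk.eta])
    have hc := heq w' v' h'
    have t1 : dv (dv (cx F)) w' v' = ((fderiv ℝ G (w', v') (0, 1) : ℝ) : ℂ) := by
      rw [dv_cx_eq]
      exact W_dv hU hG hGq h'
    have t2 := W_dwb_dw hU hF hQfF h'
    have t3 : dw (dv (cx F)) w' v' = (((fderiv ℝ G (w', v') (1, 0) : ℝ) : ℂ)
        - Complex.I * ((fderiv ℝ G (w', v') (Complex.I, 0) : ℝ) : ℂ)) / 2 := by
      rw [dv_cx_eq]
      exact W_dw hU hG hGq h'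
    have t4 : dwb (dv (cx F)) w' v' = (((fderiv ℝ G (w', v') (1, 0) : ℝ) : ℂ)
        + Complex.I * ((fderiv ℝ G (w', v') (Complex.I, 0) : ℝ) : ℂ)) / 2 := by
      rw [dv_cx_eq]
      exact W_dwb hU hG hGq h'
    rw [t1, t2, t3, t4] at hc
    have hcast : ((fderiv ℝ G (w', v') (0, 1)
          * (fderiv ℝ (fun p => fderiv ℝ Ff p ((1:ℂ), (0:ℝ))) (w', v') (1, 0)
            + fderiv ℝ (fun p => fderiv ℝ Ff p ((Complex.I:ℂ), (0:ℝ))) (w', v') (Complex.I, 0))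
        - fderiv ℝ G (w', v') (1, 0) ^ 2 - fderiv ℝ G (w', v') (Complex.I, 0) ^ 2 : ℝ) : ℂ)
        = ((16 * Real.exp (2 * v') : ℝ) : ℂ) := by
      push_cast at hc ⊢
      linear_combination (4:ℂ) * hc
        - ((fderiv ℝ G (w', v') (Complex.I, 0) : ℝ) : ℂ)^2 * Complex.I_sq
    exact_mod_cast hcast
  have h7 : a * fL - gx ^ 2 - gy ^ 2 = 16 * E := heqR w v₀ hq
  -- derivative of the euclid equation in the v direction, at q
  have h8 : b * fL + a * (gxx + gyy) - 2 * gx * gxv - 2 * gy * gyv = 32 * E := by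
    set AF : ℂ × ℝ → ℝ := fun p => fderiv ℝ Ff p ((1:ℂ), (0:ℝ)) with hAF_def
    set BF : ℂ × ℝ → ℝ := fun p => fderiv ℝ Ff p ((Complex.I:ℂ), (0:ℝ)) with hBF_def
    set G1 : ℂ × ℝ → ℝ := fun p => fderiv ℝ G p ((1:ℂ), (0:ℝ)) with hG1_def
    set GI : ℂ × ℝ → ℝ := fun p => fderiv ℝ G p ((Complex.I:ℂ), (0:ℝ)) with hGI_def
    set Gv : ℂ × ℝ → ℝ := fun p => fderiv ℝ G p ((0:ℂ), (1:ℝ)) with hGv_def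
    set A2 : ℂ × ℝ → ℝ := fun p => fderiv ℝ AF p ((1:ℂ), (0:ℝ)) with hA2_def
    set B2 : ℂ × ℝ → ℝ := fun p => fderiv ℝ BF p ((Complex.I:ℂ), (0:ℝ)) with hB2_def
    have hAFs : ContDiffOn ℝ (⊤:ℕ∞) AF U := contDiffOn_pd hF hU _
    have hBFs : ContDiffOn ℝ (⊤:ℕ∞) BF U := contDiffOn_pd hF hU _
    have hG1s : ContDiffOn ℝ (⊤:ℕ∞) G1 U := contDiffOn_pd hG hU _
    have hGIs : ContDiffOn ℝ (⊤:ℕ∞) GI U := contDiffOn_pd hG hU _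
    have hGvs : ContDiffOn ℝ (⊤:ℕ∞) Gv U := contDiffOn_pd hG hU _
    have hA2s : ContDiffOn ℝ (⊤:ℕ∞) A2 U := contDiffOn_pd hAFs hU _
    have hB2s : ContDiffOn ℝ (⊤:ℕ∞) B2 U := contDiffOn_pd hBFs hU _
    have hphi : (fun t : ℝ => Gv (w, t) * (A2 (w, t) + B2 (w, t))
          - ((G1 (w, t)) ^ 2 + (GI (w, t)) ^ 2))
        =ᶠ[nhds v₀] (fun t => 16 * Real.exp (2 * t)) := by
      filter_upwards [slice_eventuallyV hU hq] with t ht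
      have h := heqR w t ht
      linear_combination h
    have hGvt : HasDerivAt (fun t : ℝ => Gv (w, t)) (fderiv ℝ Gv (w, v₀) ((0:ℂ),(1:ℝ))) v₀ :=
      hasDerivAt_sliceV (diffAt_of_cdo hGvs hU hq)
    have hA2t : HasDerivAt (fun t : ℝ => A2 (w, t)) (fderiv ℝ A2 (w, v₀) ((0:ℂ),(1:ℝ))) v₀ :=
      hasDerivAt_sliceV (diffAt_of_cdo hA2s hU hq)
    have hB2t : HasDerivAt (fun t : ℝ => B2 (w, t)) (fderiv ℝ B2 (w, v₀) ((0:ℂ),(1:ℝ))) v₀ :=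
      hasDerivAt_sliceV (diffAt_of_cdo hB2s hU hq)
    have hG1t : HasDerivAt (fun t : ℝ => G1 (w, t)) (fderiv ℝ G1 (w, v₀) ((0:ℂ),(1:ℝ))) v₀ :=
      hasDerivAt_sliceV (diffAt_of_cdo hG1s hU hq)
    have hGIt : HasDerivAt (fun t : ℝ => GI (w, t)) (fderiv ℝ GI (w, v₀) ((0:ℂ),(1:ℝ))) v₀ :=
      hasDerivAt_sliceV (diffAt_of_cdo hGIs hU hq)
    have hL := (hGvt.mul (hA2t.add hB2t)).sub ((hG1t.pow 2).add (hGIt.pow 2))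
    have hR : HasDerivAt (fun t : ℝ => 16 * Real.exp (2 * t))
        (16 * (Real.exp (2 * v₀) * 2)) v₀ :=
      by
        have h0 : HasDerivAt (fun t : ℝ => 16 * Real.exp (2 * id t))
            (16 * (Real.exp (2 * id v₀) * (2 * 1))) v₀ :=
          (((hasDerivAt_id v₀).const_mul (2:ℝ)).exp).const_mul (16:ℝ)
        simpa using h0
    have hder := hphi.deriv_eq
    erw [hL.deriv, hR.deriv] at hder
    have hA2v : fderiv ℝ A2 (w, v₀) ((0:ℂ),(1:ℝ)) = gxx := by
      have s1 := pd2_symm hAFs hU hq ((1:ℂ),(0:ℝ)) ((0:ℂ),(1:ℝ))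
      have s2 : (fun p => fderiv ℝ AF p ((0:ℂ),(1:ℝ)))
          =ᶠ[nhds ((w, v₀) : ℂ × ℝ)] (fun p => fderiv ℝ G p ((1:ℂ),(0:ℝ))) := by
        filter_upwards [hU.mem_nhds hq] with r hr
        exact pd2_symm hF hU hr ((1:ℂ),(0:ℝ)) ((0:ℂ),(1:ℝ))
      have s3 := s2.fderiv_eq (𝕜 := ℝ)
      calc fderiv ℝ A2 (w, v₀) ((0:ℂ),(1:ℝ))
          = fderiv ℝ (fun p => fderiv ℝ AF p ((0:ℂ),(1:ℝ))) (w, v₀) ((1:ℂ),(0:ℝ)) := s1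
        _ = fderiv ℝ (fun p => fderiv ℝ G p ((1:ℂ),(0:ℝ))) (w, v₀) ((1:ℂ),(0:ℝ)) := by rw [s3]
        _ = gxx := rfl
    have hB2v : fderiv ℝ B2 (w, v₀) ((0:ℂ),(1:ℝ)) = gyy := by
      have s1 := pd2_symm hBFs hU hq ((Complex.I:ℂ),(0:ℝ)) ((0:ℂ),(1:ℝ))
      have s2 : (fun p => fderiv ℝ BF p ((0:ℂ),(1:ℝ)))
          =ᶠ[nhds ((w, v₀) : ℂ × ℝ)] (fun p => fderiv ℝ G p ((Complex.I:ℂ),(0:ℝ))) := by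
        filter_upwards [hU.mem_nhds hq] with r hr
        exact pd2_symm hF hU hr ((Complex.I:ℂ),(0:ℝ)) ((0:ℂ),(1:ℝ))
      have s3 := s2.fderiv_eq (𝕜 := ℝ)
      calc fderiv ℝ B2 (w, v₀) ((0:ℂ),(1:ℝ))
          = fderiv ℝ (fun p => fderiv ℝ BF p ((0:ℂ),(1:ℝ))) (w, v₀) ((Complex.I:ℂ),(0:ℝ)) := s1
        _ = fderiv ℝ (fun p => fderiv ℝ G p ((Complex.I:ℂ),(0:ℝ))) (w, v₀) ((Complex.I:ℂ),(0:ℝ)) := by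
              rw [s3]
        _ = gyy := rfl
    rw [hA2v, hB2v] at hder
    have r1 : fderiv ℝ Gv (w, v₀) ((0:ℂ),(1:ℝ)) = b := rfl
    have r2 : A2 (w, v₀) + B2 (w, v₀) = fL := rfl
    have r3 : Gv (w, v₀) = a := rfl
    have r4 : G1 (w, v₀) = gx := rfl
    have r5 : GI (w, v₀) = gy := rfl
    have r6 : fderiv ℝ G1 (w, v₀) ((0:ℂ),(1:ℝ)) = gxv := rfl
    have r7 : fderiv ℝ GI (w, v₀) ((0:ℂ),(1:ℝ)) = gyv := rfl
    have r8 : Real.exp (2 * v₀) = E := rfl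
    rw [r1, r3, r4, r5, r6, r7, r8] at hder
    simp only [Pi.add_apply] at hder
    linear_combination hder + b * r2
  -- first-order inverse-function identities on U'
  have hmemU : ∀ r ∈ U', ((r.1, Vf r) : ℂ × ℝ) ∈ U := by
    intro r hr
    exact (hfrom r.1 r.2 (by rwa [Prod.mk.eta])).1
  have hGm : ∀ r ∈ U', G (r.1, Vf r) = r.2 := by
    intro r hr
    have h1 := (hfrom r.1 r.2 (by rwa [Prod.mk.eta])).2
    have h2 := hdvRF r.1 (V r.1 r.2) (hfrom r.1 r.2 (by rwa [Prod.mk.eta])).1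
    rw [h2] at h1
    exact h1
  have hIfirst : ∀ p' ∈ U', ∀ d : ℂ × ℝ,
      fderiv ℝ G (p'.1, Vf p') (d.1, 0)
        + fderiv ℝ Vf p' d * fderiv ℝ G (p'.1, Vf p') (0, 1) = d.2 := by
    intro p' hp' d
    have hcomp := hasFDerivAt_compV (H := G) (Vf := Vf) (p := p')
      (diffAt_of_cdo hG hU (hmemU p' hp')) (diffAt_of_cdo hV hU' hp')
    have hev : (fun r : ℂ × ℝ => G (r.1, Vf r)) =ᶠ[nhds p'] (fun r => r.2) := by
      filter_upwards [hU'.mem_nhds hp'] with r hr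
      exact hGm r hr
    have hfd : fderiv ℝ (fun r : ℂ × ℝ => G (r.1, Vf r)) p'
        = fderiv ℝ (fun r : ℂ × ℝ => r.2) p' := hev.fderiv_eq
    rw [hcomp.fderiv, fderiv_snd] at hfd
    have happ := congrArg (fun L : (ℂ × ℝ) →L[ℝ] ℝ => L d) hfd
    simp only [ContinuousLinearMap.comp_apply, ContinuousLinearMap.prod_apply,
      ContinuousLinearMap.coe_fst', ContinuousLinearMap.coe_snd'] at happ
    rw [clm_pair] at happ
    linarith [happ]
  have h1 : a * vj = 1 := by
    have h := hIfirst (w, j) hp ((0 : ℂ), (1 : ℝ))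
    have hVfwj : Vf (w, j) = v₀ := rfl
    simp only [hVfwj] at h
    have hz : fderiv ℝ G (w, v₀) ((0 : ℂ), (0 : ℝ)) = 0 := map_zero _
    rw [hz] at h
    rw [← ha_def, ← hvj_def] at h
    linarith
  have h2 : gx + a * vx = 0 := by
    have h := hIfirst (w, j) hp ((1 : ℂ), (0 : ℝ))
    have hVfwj : Vf (w, j) = v₀ := rfl
    simp only [hVfwj] at h
    rw [← ha_def, ← hvx_def, ← hgx_def] at h
    linarith
  have h3 : gy + a * vy = 0 := by
    have h := hIfirst (w, j) hp ((Complex.I : ℂ), (0 : ℝ))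
    have hVfwj : Vf (w, j) = v₀ := rfl
    simp only [hVfwj] at h
    rw [← ha_def, ← hvy_def, ← hgy_def] at h
    linarith
  -- second-order identities
  have h4 : gxx + 2 * vx * gxv + vx ^ 2 * b + a * vxx = 0 := by
    set G1 : ℂ × ℝ → ℝ := fun p => fderiv ℝ G p ((1:ℂ), (0:ℝ)) with hG1_def
    set Gv : ℂ × ℝ → ℝ := fun p => fderiv ℝ G p ((0:ℂ), (1:ℝ)) with hGv_def
    set VA : ℂ × ℝ → ℝ := fun p => fderiv ℝ Vf p ((1:ℂ), (0:ℝ)) with hVA_def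
    have hG1s : ContDiffOn ℝ (⊤:ℕ∞) G1 U := contDiffOn_pd hG hU _
    have hGvs : ContDiffOn ℝ (⊤:ℕ∞) Gv U := contDiffOn_pd hG hU _
    have hVAs : ContDiffOn ℝ (⊤:ℕ∞) VA U' := contDiffOn_pd hV hU' _
    have hzero : (fun r : ℂ × ℝ => G1 (r.1, Vf r) + VA r * Gv (r.1, Vf r))
        =ᶠ[nhds ((w, j) : ℂ × ℝ)] (fun _ => (0:ℝ)) := by
      filter_upwards [hU'.mem_nhds hp] with r hr
      have h := hIfirst r hr ((1:ℂ), (0:ℝ))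
      simpa using h
    have hc1 := hasFDerivAt_compV (H := G1) (Vf := Vf) (p := ((w, j) : ℂ × ℝ))
      (diffAt_of_cdo hG1s hU (hmemU (w, j) hp)) (diffAt_of_cdo hV hU' hp)
    have hc2 := hasFDerivAt_compV (H := Gv) (Vf := Vf) (p := ((w, j) : ℂ × ℝ))
      (diffAt_of_cdo hGvs hU (hmemU (w, j) hp)) (diffAt_of_cdo hV hU' hp)
    have hc4 := (diffAt_of_cdo hVAs hU' hp).hasFDerivAt
    have hsum := hc1.add (hc4.mul hc2)
    have h0 : fderiv ℝ (fun r : ℂ × ℝ => G1 (r.1, Vf r) + VA r * Gv (r.1, Vf r))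
        ((w, j) : ℂ × ℝ) = 0 := by
      rw [hzero.fderiv_eq]
      exact fderiv_const_apply 0
    erw [hsum.fderiv] at h0
    have happ := congrArg (fun L : (ℂ × ℝ) →L[ℝ] ℝ => L ((1:ℂ), (0:ℝ))) h0
    simp only [ContinuousLinearMap.add_apply, ContinuousLinearMap.smul_apply,
      ContinuousLinearMap.comp_apply, ContinuousLinearMap.prod_apply,
      ContinuousLinearMap.coe_fst', ContinuousLinearMap.coe_snd',
      ContinuousLinearMap.zero_apply, smul_eq_mul] at happ
    have hVfwj : Vf (w, j) = v₀ := rfl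
    rw [hVfwj] at happ
    have e1 : fderiv ℝ G1 (w, v₀) ((1:ℂ), fderiv ℝ Vf (w, j) ((1:ℂ), (0:ℝ)))
        = fderiv ℝ G1 (w, v₀) ((1:ℂ), (0:ℝ))
          + fderiv ℝ Vf (w, j) ((1:ℂ), (0:ℝ)) * fderiv ℝ G1 (w, v₀) ((0:ℂ), (1:ℝ)) := by
      rw [clm_pair]
    have e2 : fderiv ℝ Gv (w, v₀) ((1:ℂ), fderiv ℝ Vf (w, j) ((1:ℂ), (0:ℝ)))
        = fderiv ℝ Gv (w, v₀) ((1:ℂ), (0:ℝ))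
          + fderiv ℝ Vf (w, j) ((1:ℂ), (0:ℝ)) * fderiv ℝ Gv (w, v₀) ((0:ℂ), (1:ℝ)) := by
      rw [clm_pair]
    rw [e1, e2] at happ
    have hsym : fderiv ℝ Gv (w, v₀) ((1:ℂ), (0:ℝ)) = gxv :=
      pd2_symm hG hU hq ((0:ℂ), (1:ℝ)) ((1:ℂ), (0:ℝ))
    rw [hsym] at happ
    have r1 : fderiv ℝ G1 (w, v₀) ((1:ℂ), (0:ℝ)) = gxx := rfl
    have r2 : fderiv ℝ Vf (w, j) ((1:ℂ), (0:ℝ)) = vx := rfl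
    have r3 : fderiv ℝ G1 (w, v₀) ((0:ℂ), (1:ℝ)) = gxv := rfl
    have r4 : fderiv ℝ Gv (w, v₀) ((0:ℂ), (1:ℝ)) = b := rfl
    have r5 : VA (w, j) = vx := rfl
    have r6 : Gv (w, v₀) = a := rfl
    have r7 : fderiv ℝ VA (w, j) ((1:ℂ), (0:ℝ)) = vxx := rfl
    rw [r1, r2, r3, r4, r5, r6, r7] at happ
    linear_combination happ
  have h5 : gyy + 2 * vy * gyv + vy ^ 2 * b + a * vyy = 0 := by
    set GI : ℂ × ℝ → ℝ := fun p => fderiv ℝ G p ((Complex.I:ℂ), (0:ℝ)) with hGI_def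
    set Gv : ℂ × ℝ → ℝ := fun p => fderiv ℝ G p ((0:ℂ), (1:ℝ)) with hGv_def
    set VB : ℂ × ℝ → ℝ := fun p => fderiv ℝ Vf p ((Complex.I:ℂ), (0:ℝ)) with hVB_def
    have hGIs : ContDiffOn ℝ (⊤:ℕ∞) GI U := contDiffOn_pd hG hU _
    have hGvs : ContDiffOn ℝ (⊤:ℕ∞) Gv U := contDiffOn_pd hG hU _
    have hVBs : ContDiffOn ℝ (⊤:ℕ∞) VB U' := contDiffOn_pd hV hU' _
    have hzero : (fun r : ℂ × ℝ => GI (r.1, Vf r) + VB r * Gv (r.1, Vf r))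
        =ᶠ[nhds ((w, j) : ℂ × ℝ)] (fun _ => (0:ℝ)) := by
      filter_upwards [hU'.mem_nhds hp] with r hr
      have h := hIfirst r hr ((Complex.I:ℂ), (0:ℝ))
      simpa using h
    have hc1 := hasFDerivAt_compV (H := GI) (Vf := Vf) (p := ((w, j) : ℂ × ℝ))
      (diffAt_of_cdo hGIs hU (hmemU (w, j) hp)) (diffAt_of_cdo hV hU' hp)
    have hc2 := hasFDerivAt_compV (H := Gv) (Vf := Vf) (p := ((w, j) : ℂ × ℝ))
      (diffAt_of_cdo hGvs hU (hmemU (w, j) hp)) (diffAt_of_cdo hV hU' hp)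
    have hc4 := (diffAt_of_cdo hVBs hU' hp).hasFDerivAt
    have hsum := hc1.add (hc4.mul hc2)
    have h0 : fderiv ℝ (fun r : ℂ × ℝ => GI (r.1, Vf r) + VB r * Gv (r.1, Vf r))
        ((w, j) : ℂ × ℝ) = 0 := by
      rw [hzero.fderiv_eq]
      exact fderiv_const_apply 0
    erw [hsum.fderiv] at h0
    have happ := congrArg (fun L : (ℂ × ℝ) →L[ℝ] ℝ => L ((Complex.I:ℂ), (0:ℝ))) h0
    simp only [ContinuousLinearMap.add_apply, ContinuousLinearMap.smul_apply,
      ContinuousLinearMap.comp_apply, ContinuousLinearMap.prod_apply,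
      ContinuousLinearMap.coe_fst', ContinuousLinearMap.coe_snd',
      ContinuousLinearMap.zero_apply, smul_eq_mul] at happ
    have hVfwj : Vf (w, j) = v₀ := rfl
    rw [hVfwj] at happ
    have e1 : fderiv ℝ GI (w, v₀) ((Complex.I:ℂ), fderiv ℝ Vf (w, j) ((Complex.I:ℂ), (0:ℝ)))
        = fderiv ℝ GI (w, v₀) ((Complex.I:ℂ), (0:ℝ))
          + fderiv ℝ Vf (w, j) ((Complex.I:ℂ), (0:ℝ)) * fderiv ℝ GI (w, v₀) ((0:ℂ), (1:ℝ)) := by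
      rw [clm_pair]
    have e2 : fderiv ℝ Gv (w, v₀) ((Complex.I:ℂ), fderiv ℝ Vf (w, j) ((Complex.I:ℂ), (0:ℝ)))
        = fderiv ℝ Gv (w, v₀) ((Complex.I:ℂ), (0:ℝ))
          + fderiv ℝ Vf (w, j) ((Complex.I:ℂ), (0:ℝ)) * fderiv ℝ Gv (w, v₀) ((0:ℂ), (1:ℝ)) := by
      rw [clm_pair]
    rw [e1, e2] at happ
    have hsym : fderiv ℝ Gv (w, v₀) ((Complex.I:ℂ), (0:ℝ)) = gyv :=
      pd2_symm hG hU hq ((0:ℂ), (1:ℝ)) ((Complex.I:ℂ), (0:ℝ))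
    rw [hsym] at happ
    have r1 : fderiv ℝ GI (w, v₀) ((Complex.I:ℂ), (0:ℝ)) = gyy := rfl
    have r2 : fderiv ℝ Vf (w, j) ((Complex.I:ℂ), (0:ℝ)) = vy := rfl
    have r3 : fderiv ℝ GI (w, v₀) ((0:ℂ), (1:ℝ)) = gyv := rfl
    have r4 : fderiv ℝ Gv (w, v₀) ((0:ℂ), (1:ℝ)) = b := rfl
    have r5 : VB (w, j) = vy := rfl
    have r6 : Gv (w, v₀) = a := rfl
    have r7 : fderiv ℝ VB (w, j) ((Complex.I:ℂ), (0:ℝ)) = vyy := rfl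
    rw [r1, r2, r3, r4, r5, r6, r7] at happ
    linear_combination happ
  have h6 : b * vj ^ 2 + a * vjj = 0 := by
    set Gv : ℂ × ℝ → ℝ := fun p => fderiv ℝ G p ((0:ℂ), (1:ℝ)) with hGv_def
    set VJ : ℂ × ℝ → ℝ := fun p => fderiv ℝ Vf p ((0:ℂ), (1:ℝ)) with hVJ_def
    have hGvs : ContDiffOn ℝ (⊤:ℕ∞) Gv U := contDiffOn_pd hG hU _
    have hVJs : ContDiffOn ℝ (⊤:ℕ∞) VJ U' := contDiffOn_pd hV hU' _
    have hzero : (fun r : ℂ × ℝ => VJ r * Gv (r.1, Vf r))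
        =ᶠ[nhds ((w, j) : ℂ × ℝ)] (fun _ => (1:ℝ)) := by
      filter_upwards [hU'.mem_nhds hp] with r hr
      have h := hIfirst r hr ((0:ℂ), (1:ℝ))
      have hz : fderiv ℝ G (r.1, Vf r) ((0:ℂ), (0:ℝ)) = 0 := map_zero _
      rw [hz] at h
      simpa using h
    have hc2 := hasFDerivAt_compV (H := Gv) (Vf := Vf) (p := ((w, j) : ℂ × ℝ))
      (diffAt_of_cdo hGvs hU (hmemU (w, j) hp)) (diffAt_of_cdo hV hU' hp)
    have hc4 := (diffAt_of_cdo hVJs hU' hp).hasFDerivAt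
    have hmul := hc4.mul hc2
    have h0 : fderiv ℝ (fun r : ℂ × ℝ => VJ r * Gv (r.1, Vf r)) ((w, j) : ℂ × ℝ) = 0 := by
      rw [hzero.fderiv_eq]
      exact fderiv_const_apply 1
    erw [hmul.fderiv] at h0
    have happ := congrArg (fun L : (ℂ × ℝ) →L[ℝ] ℝ => L ((0:ℂ), (1:ℝ))) h0
    simp only [ContinuousLinearMap.add_apply, ContinuousLinearMap.smul_apply,
      ContinuousLinearMap.comp_apply, ContinuousLinearMap.prod_apply,
      ContinuousLinearMap.coe_fst', ContinuousLinearMap.coe_snd',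
      ContinuousLinearMap.zero_apply, smul_eq_mul] at happ
    have hVfwj : Vf (w, j) = v₀ := rfl
    rw [hVfwj] at happ
    have e2 : fderiv ℝ Gv (w, v₀) ((0:ℂ), fderiv ℝ Vf (w, j) ((0:ℂ), (1:ℝ)))
        = fderiv ℝ Vf (w, j) ((0:ℂ), (1:ℝ)) * fderiv ℝ Gv (w, v₀) ((0:ℂ), (1:ℝ)) := by
      rw [clm_pair]
      simp
      exact map_zero _
    rw [e2] at happ
    have r1 : VJ (w, j) = vj := rfl
    have r2 : fderiv ℝ Vf (w, j) ((0:ℂ), (1:ℝ)) = vj := rfl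
    have r3 : fderiv ℝ Gv (w, v₀) ((0:ℂ), (1:ℝ)) = b := rfl
    have r4 : Gv (w, v₀) = a := rfl
    have r5 : fderiv ℝ VJ (w, j) ((0:ℂ), (1:ℝ)) = vjj := rfl
    rw [r1, r2, r3, r4, r5] at happ
    linear_combination happ
  -- conclusion from algebra
  have key : vxx + vyy + 16 * E * vjj + 32 * E * vj ^ 2 = 0 :=
    toda_algebra a b gx gy gxx gyy gxv gyv fL E vx vy vj vxx vyy vjj h1 h2 h3 h4 h5 h6 h7 h8
  -- translate the goal
  have lhs1 : dwb (dw (cx V)) w j = ((vxx + vyy : ℝ) : ℂ) / 4 :=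
    W_dwb_dw hU' hV hQfV hp
  have lhs2 : deriv (fun s => deriv (fun r => Real.exp (2 * V w r)) s) j
      = E * (2 * vj) * (2 * vj) + E * (2 * vjj) := by
    have hinner : (fun s => deriv (fun r => Real.exp (2 * V w r)) s)
        =ᶠ[nhds j] (fun s => Real.exp (2 * V w s) * (2 * fderiv ℝ Vf (w, s) ((0:ℂ),(1:ℝ)))) := by
      filter_upwards [slice_eventuallyV hU' hp] with s hs
      have hVs : HasDerivAt (fun r : ℝ => V w r) (fderiv ℝ Vf (w, s) ((0:ℂ),(1:ℝ))) s :=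
        hasDerivAt_sliceV (diffAt_of_cdo hV hU' hs)
      exact ((hVs.const_mul (2:ℝ)).exp).deriv
    have hVj : HasDerivAt (fun t : ℝ => V w t) vj j :=
      hasDerivAt_sliceV (diffAt_of_cdo hV hU' hp)
    have hexp : HasDerivAt (fun s : ℝ => Real.exp (2 * V w s))
        (Real.exp (2 * V w j) * (2 * vj)) j := (hVj.const_mul (2:ℝ)).exp
    have hVJt : HasDerivAt (fun s : ℝ => fderiv ℝ Vf (w, s) ((0:ℂ),(1:ℝ))) vjj j :=
      hasDerivAt_sliceV (diffAt_of_cdo (contDiffOn_pd hV hU' ((0:ℂ),(1:ℝ))) hU' hp)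
    have hprod := (hexp.mul (hVJt.const_mul (2:ℝ))).deriv
    exact hinner.deriv_eq.trans hprod
  rw [lhs1, lhs2]
  have hre : (vxx + vyy) / 4 + 2 * (E * (2 * vj) * (2 * vj) + E * (2 * vjj)) = 0 := by
    linear_combination key / 4
  calc ((vxx + vyy : ℝ) : ℂ) / 4 + 2 * ((E * (2 * vj) * (2 * vj) + E * (2 * vjj) : ℝ) : ℂ)
      = (((vxx + vyy) / 4 + 2 * (E * (2 * vj) * (2 * vj) + E * (2 * vjj)) : ℝ) : ℂ) := by
        push_cast; ring
    _ = 0 := by rw [hre]; simp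


end
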